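/- arXiv:1305.0955 — 2 statements merged into one kernel-verified Lean document; each statement's English description precedes it below -/
import Mathlib

section
/- Let M : [0,∞) → [0,∞) be continuous with M(t) ≥ m₀ > 0 for all t ≥ 0, and suppose there exists ϑ ≥ m₀ such that M(t₁)/t₁ − M(t₂)/t₂ ≤ ϑ(1/t₁ − 1/t₂) for all t₁ > t₂ > 0. Define M̂(t) = ∫₀ᵗ M(s) ds. Then M̂(t) ≥ (M(t) + ϑ)t/2 for all t ≥ 0. -/
/-!
Condition (M₃) says exactly that `s ↦ (M s - ϑ) / s` is antitone on `(0, ∞)`. Hence on `(0, t]`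
the graph of `M` lies above the chord-like line `s ↦ ϑ + (M t - ϑ) s / t`, whose integral over
`[0, t]` is `(M t + ϑ) t / 2`.
-/

open Set

theorem antitoneOn_sub_div_of_condM3 {M : ℝ → ℝ} {ϑ : ℝ}
    (hM3 : ∀ t₁ t₂ : ℝ, t₂ > 0 → t₁ > t₂ →
      M t₁ / t₁ - M t₂ / t₂ ≤ ϑ * (1 / t₁ - 1 / t₂)) :
    AntitoneOn (fun s => (M s - ϑ) / s) (Ioi 0) := by
  intro s hs t _ hst
  rcases hst.eq_or_lt with rfl | hlt
  · rfl
  have h := hM3 t s hs hlt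
  simp only [sub_div, mul_sub, mul_one_div] at h ⊢
  linarith

theorem line_le_of_antitoneOn_sub_div {M : ℝ → ℝ} {ϑ s t : ℝ}
    (hM : AntitoneOn (fun s => (M s - ϑ) / s) (Ioi 0)) (hs : 0 < s) (hst : s ≤ t) :
    ϑ + (M t - ϑ) / t * s ≤ M s := by
  have h : (M t - ϑ) / t ≤ (M s - ϑ) / s := hM hs (hs.trans_le hst) hst
  have h' : (M t - ϑ) / t * s ≤ M s - ϑ := by rwa [le_div_iff₀ hs] at h
  linarith

theorem integral_affine (a b t : ℝ) : ∫ s in (0:ℝ)..t, (a + b * s) = a * t + b * t ^ 2 / 2 := by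
  rw [intervalIntegral.integral_add intervalIntegrable_const
    ((continuous_const_mul b).intervalIntegrable 0 t),
    intervalIntegral.integral_const, intervalIntegral.integral_const_mul, integral_id]
  ring

theorem stmt_1_general (M : ℝ → ℝ)
    (hMcont : ContinuousOn M (Set.Ici 0))
    (ϑ : ℝ)
    (hM3 : ∀ t₁ t₂ : ℝ, t₂ > 0 → t₁ > t₂ →
      M t₁ / t₁ - M t₂ / t₂ ≤ ϑ * (1 / t₁ - 1 / t₂)) :
    ∀ t ≥ 0, (M t + ϑ) * t / 2 ≤ ∫ s in (0:ℝ)..t, M s := by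
  intro t ht
  have hM := antitoneOn_sub_div_of_condM3 hM3
  have hMint : IntervalIntegrable M MeasureTheory.volume 0 t :=
    (hMcont.mono (by simpa [uIcc_of_le ht] using Icc_subset_Ici_self)).intervalIntegrable
  have hline : (M t + ϑ) * t / 2 = ∫ s in (0:ℝ)..t, (ϑ + (M t - ϑ) / t * s) := by
    rw [integral_affine]
    rcases ht.eq_or_lt with rfl | htpos
    · simp
    · field_simp
      ring
  rw [hline]
  exact intervalIntegral.integral_mono_on_of_le_Ioo ht
    ((continuous_const.add (continuous_const_mul _)).intervalIntegrable 0 t) hMint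
    fun s hs => line_le_of_antitoneOn_sub_div hM hs.1 hs.2.le

theorem stmt_1 (M : ℝ → ℝ) (m₀ : ℝ) (hm₀ : 0 < m₀)
    (hMcont : ContinuousOn M (Set.Ici 0))
    (hMpos : ∀ t ≥ 0, m₀ ≤ M t)
    (ϑ : ℝ) (hϑ : m₀ ≤ ϑ)
    (hM3 : ∀ t₁ t₂ : ℝ, t₂ > 0 → t₁ > t₂ →
      M t₁ / t₁ - M t₂ / t₂ ≤ ϑ * (1 / t₁ - 1 / t₂)) :
    ∀ t ≥ 0, (M t + ϑ) * t / 2 ≤ ∫ s in (0:ℝ)..t, M s :=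
  stmt_1_general M hMcont ϑ hM3
end

section
/- Let M : [0,∞) → [0,∞) be continuous and suppose there exists ϑ > 0 such that M(t₁)/t₁ − M(t₂)/t₂ ≤ ϑ(1/t₁ − 1/t₂) for all t₁ > t₂ > 0. Define M̂(t) = ∫₀ᵗ M(s) ds. Then the function t ↦ (1/2) M̂(t) − (1/4) M(t) t is non-decreasing on [0,∞). -/
/-!
Condition (M₃) says exactly that `t ↦ (M t - ϑ) / t` is antitone on `(0, ∞)`. Hence, for fixed
`b > 0`, the graph of `M` on `(0, b]` lies above the line `ℓ s = c s + ϑ` through `(b, M b)`,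
`c = (M b - ϑ) / b`. Comparing `M` with `ℓ` in the integral and at the endpoints `a` and `b`
gives `½ ∫ₐᵇ M - ¼ (b M b - a M a) ≥ ϑ (b - a) / 4 ≥ 0`.
-/

open Set intervalIntegral MeasureTheory

lemma antitoneOn_sub_div_of_sub_div_le {M : ℝ → ℝ} {ϑ : ℝ}
    (hM : ∀ t₁ t₂ : ℝ, t₂ > 0 → t₁ > t₂ → M t₁ / t₁ - M t₂ / t₂ ≤ ϑ * (1 / t₁ - 1 / t₂)) :
    AntitoneOn (fun t => (M t - ϑ) / t) (Ioi 0) := by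
  intro s hs t _ hst
  rcases hst.eq_or_lt with rfl | hlt
  · exact le_rfl
  have h := hM t s hs hlt
  rw [mul_sub, mul_one_div, mul_one_div] at h
  simp only [sub_div]
  linarith

lemma add_le_of_antitoneOn_sub_div {M : ℝ → ℝ} {ϑ b s : ℝ}
    (hM : AntitoneOn (fun t => (M t - ϑ) / t) (Ioi 0)) (hs : 0 < s) (hsb : s ≤ b) :
    (M b - ϑ) / b * s + ϑ ≤ M s := by
  have h : (M b - ϑ) / b * s ≤ (M s - ϑ) / s * s :=
    mul_le_mul_of_nonneg_right (hM hs (hs.trans_le hsb) hsb) hs.le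
  rw [div_mul_cancel₀ _ hs.ne'] at h
  linarith

lemma integral_const_mul_add_const (a b c ϑ : ℝ) :
    ∫ s in a..b, c * s + ϑ = c * (b ^ 2 - a ^ 2) / 2 + ϑ * (b - a) := by
  rw [integral_add ((continuous_const_mul c).intervalIntegrable a b) intervalIntegrable_const,
    intervalIntegral.integral_const_mul, integral_id, intervalIntegral.integral_const, smul_eq_mul]
  ring

lemma sub_div_four_le_integral_div_two {f : ℝ → ℝ} {a b c ϑ : ℝ} (ha : 0 ≤ a) (hab : a ≤ b)
    (hϑ : 0 ≤ ϑ) (hf : IntervalIntegrable f volume a b)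
    (hlow : ∀ s, 0 < s → s ≤ b → c * s + ϑ ≤ f s) (hfb : f b = c * b + ϑ) :
    (b * f b - a * f a) / 4 ≤ (∫ s in a..b, f s) / 2 := by
  have hint : c * (b ^ 2 - a ^ 2) / 2 + ϑ * (b - a) ≤ ∫ s in a..b, f s := by
    rw [← integral_const_mul_add_const]
    exact integral_mono_on_of_le_Ioo hab
      ((by fun_prop : Continuous fun s => c * s + ϑ).intervalIntegrable a b) hf
      fun s hs => hlow s (ha.trans_lt hs.1) hs.2.le
  have hfa : c * a ^ 2 + ϑ * a ≤ a * f a := by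
    rcases ha.eq_or_lt with rfl | ha'
    · simp
    · nlinarith [hlow a ha' hab]
  rw [hfb]
  nlinarith [mul_nonneg hϑ (sub_nonneg.2 hab)]

theorem stmt_2_general (M : ℝ → ℝ)
    (hMcont : ContinuousOn M (Set.Ici 0))
    (ϑ : ℝ) (hϑ : 0 < ϑ)
    (hM3 : ∀ t₁ t₂ : ℝ, t₂ > 0 → t₁ > t₂ →
      M t₁ / t₁ - M t₂ / t₂ ≤ ϑ * (1 / t₁ - 1 / t₂)) :
    MonotoneOn (fun t => (1/2) * (∫ s in (0:ℝ)..t, M s) - (1/4) * M t * t)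
      (Set.Ici (0:ℝ)) := by
  have hchord := antitoneOn_sub_div_of_sub_div_le hM3
  have hM : ∀ x ∈ Ici (0 : ℝ), ∀ y ∈ Ici (0 : ℝ), IntervalIntegrable M volume x y :=
    fun x hx y hy => (hMcont.mono (ordConnected_Ici.uIcc_subset hx hy)).intervalIntegrable
  intro a ha b hb hab
  rcases hab.eq_or_lt with rfl | hlt
  · exact le_rfl
  have hb0 : 0 < b := lt_of_le_of_lt ha hlt
  have key := sub_div_four_le_integral_div_two ha hab hϑ.le (hM a ha b hb)
    (fun s hs hsb => add_le_of_antitoneOn_sub_div hchord hs hsb)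
    (by rw [div_mul_cancel₀ _ hb0.ne']; ring)
  simp only
  rw [← integral_add_adjacent_intervals (hM 0 self_mem_Ici a ha) (hM a ha b hb)]
  linarith

theorem stmt_2 (M : ℝ → ℝ)
    (hMcont : ContinuousOn M (Set.Ici 0))
    (hMnonneg : ∀ t ≥ 0, 0 ≤ M t)
    (ϑ : ℝ) (hϑ : 0 < ϑ)
    (hM3 : ∀ t₁ t₂ : ℝ, t₂ > 0 → t₁ > t₂ →
      M t₁ / t₁ - M t₂ / t₂ ≤ ϑ * (1 / t₁ - 1 / t₂)) :
    MonotoneOn (fun t => (1/2) * (∫ s in (0:ℝ)..t, M s) - (1/4) * M t * t)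
      (Set.Ici (0:ℝ)) :=
  stmt_2_general M hMcont ϑ hϑ hM3
end
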